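/- If D is a minimized DFA to which no f-merge can be applied, then D is f-minimal: any DFA D' with L(D) △ L(D') finite satisfies |Q| ≤ |Q'|. -/

import Mathlib

open Set

/-- Symmetric difference of two languages, as a set of words. -/
def symmDiffL {α : Type} (L L' : Language α) : Set (List α) :=
  {w | (w ∈ L ∧ w ∉ L') ∨ (w ∈ L' ∧ w ∉ L)}

/-- Two languages are finitely different if their symmetric difference is finite. -/
def FinDiff {α : Type} (L L' : Language α) : Prop := (symmDiffL L L').Finite

/-- The set of words that drive the DFA from its start state to state `q`. -/
def DFA.reachedBy {α σ : Type} (D : DFA α σ) (q : σ) : Set (List α) :=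
  {w | D.eval w = q}

/-- The infinite part of a DFA: states reached by infinitely many words. -/
def DFA.infinitePart {α σ : Type} (D : DFA α σ) : Set σ :=
  {q | (D.reachedBy q).Infinite}

/-- The finite part of a DFA: states reached by only finitely many words. -/
def DFA.finitePart {α σ : Type} (D : DFA α σ) : Set σ :=
  {q | (D.reachedBy q).Finite}

/-- The language induced by state `q` of DFA `D`. -/
def DFA.langOf {α σ : Type} (D : DFA α σ) (q : σ) : Language α :=
  {w | D.evalFrom q w ∈ D.accept}

/-- A DFA is minimized if all states are reachable and distinct states
induce distinct languages. -/
def DFA.Minimized {α σ : Type} (D : DFA α σ) : Prop :=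
  (∀ q, ∃ w, D.eval w = q) ∧ ∀ p q : σ, D.langOf p = D.langOf q → p = q

/-- Two DFAs have isomorphic infinite parts. -/
def InfIso {α σ σ' : Type} (D : DFA α σ) (D' : DFA α σ') : Prop :=
  ∃ f : σ → σ', Set.BijOn f D.infinitePart D'.infinitePart ∧
    (∀ q ∈ D.infinitePart, q ∈ D.accept ↔ f q ∈ D'.accept) ∧
    (∀ q ∈ D.infinitePart, ∀ c : α, f (D.step q c) = D'.step (f q) c)

/-- `S(D)`: the set of finite-difference classes of languages induced by states of `D`,
each class represented as the set of languages finitely different from the inducing one. -/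
def SClasses {α σ : Type} (D : DFA α σ) : Set (Set (Language α)) :=
  {C | ∃ q : σ, C = {L | FinDiff (D.langOf q) L}}

/-- A DFA is f-minimal if no DFA recognizing a finitely different language has
fewer states. -/
def FMinimal {α σ : Type} [Fintype σ] (D : DFA α σ) : Prop :=
  ∀ (σ' : Type) (_ : Fintype σ') (D' : DFA α σ'),
    FinDiff D.accepts D'.accepts → Fintype.card σ ≤ Fintype.card σ'


section Aux

variable {α σ σ' : Type}

lemma finDiff_symm {L L' : Language α} (h : FinDiff L L') : FinDiff L' L := by
  have : symmDiffL L' L = symmDiffL L L' := by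
    ext w; simp only [symmDiffL, Set.mem_setOf_eq]; tauto
  unfold FinDiff
  rw [this]; exact h

lemma finDiff_trans {L₁ L₂ L₃ : Language α} (h1 : FinDiff L₁ L₂) (h2 : FinDiff L₂ L₃) :
    FinDiff L₁ L₃ := by
  have hsub : symmDiffL L₁ L₃ ⊆ symmDiffL L₁ L₂ ∪ symmDiffL L₂ L₃ := by
    intro w hw
    simp only [symmDiffL, Set.mem_setOf_eq, Set.mem_union] at *
    tauto
  exact (h1.union h2).subset hsub

lemma mem_langOf_iff (D : DFA α σ) (w u : List α) :
    u ∈ D.langOf (D.eval w) ↔ w ++ u ∈ D.accepts := by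
  simp only [DFA.langOf, Set.mem_setOf_eq, DFA.mem_accepts, DFA.eval,
    DFA.evalFrom_of_append, Set.mem_setOf_eq]
  exact Iff.rfl

lemma finDiff_langOf (D : DFA α σ) (D' : DFA α σ')
    (h : FinDiff D.accepts D'.accepts) (w : List α) :
    FinDiff (D.langOf (D.eval w)) (D'.langOf (D'.eval w)) := by
  have hsub : symmDiffL (D.langOf (D.eval w)) (D'.langOf (D'.eval w)) ⊆
      (fun u => w ++ u) ⁻¹' symmDiffL D.accepts D'.accepts := by
    intro u hu
    simp only [symmDiffL, Set.mem_setOf_eq, Set.mem_preimage,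
      mem_langOf_iff] at *
    tauto
  exact (h.preimage ((List.append_right_injective w).injOn)).subset hsub

lemma langOf_eq_of_infinite (D : DFA α σ) (D' : DFA α σ')
    (h : FinDiff D.accepts D'.accepts) (p : σ) (r : σ')
    (hT : {w : List α | D.eval w = p ∧ D'.eval w = r}.Infinite) :
    D.langOf p = D'.langOf r := by
  set T := {w : List α | D.eval w = p ∧ D'.eval w = r}
  have hempty : symmDiffL (D.langOf p) (D'.langOf r) = ∅ := by
    by_contra hne
    obtain ⟨u, hu⟩ := Set.nonempty_iff_ne_empty.2 hne
    have hmap : ∀ w ∈ T, w ++ u ∈ symmDiffL D.accepts D'.accepts := by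
      intro w hw
      obtain ⟨hw1, hw2⟩ := hw
      simp only [symmDiffL, Set.mem_setOf_eq] at hu ⊢
      rw [← hw2, ← hw1] at hu
      simp only [mem_langOf_iff] at hu
      tauto
    have hTfin : T.Finite := by
      have himg : (fun w => w ++ u) '' T ⊆ symmDiffL D.accepts D'.accepts := by
        rintro _ ⟨w, hw, rfl⟩; exact hmap w hw
      refine Set.Finite.of_finite_image (h.subset himg) ?_
      exact fun a _ b _ hab => by simpa using hab
    exact hT hTfin
  ext u
  have h1 : u ∉ symmDiffL (D.langOf p) (D'.langOf r) := by rw [hempty]; exact id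
  simp only [symmDiffL, Set.mem_setOf_eq] at h1
  constructor <;> intro hm <;> by_contra hc <;> exact h1 (by tauto)

end Aux

/-- A minimized DFA to which no f-merge applies is f-minimal. -/
theorem fminimal_of_no_fmerge {α σ : Type} [Fintype σ] (D : DFA α σ)
    (hmin : D.Minimized)
    (hnomerge : ¬ ∃ p q : σ, p ≠ q ∧ p ∈ D.finitePart ∧
        FinDiff (D.langOf p) (D.langOf q)) :
    FMinimal D := by
  intro σ' _ D' hFD
  classical
  have key : ∀ q : σ, ∃ r : σ',
      {w : List α | D.eval w = q ∧ D'.eval w = r}.Nonempty ∧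
      ((D.reachedBy q).Infinite → {w : List α | D.eval w = q ∧ D'.eval w = r}.Infinite) := by
    intro q
    by_cases hq : (D.reachedBy q).Infinite
    · have : ∃ r : σ', {w : List α | D.eval w = q ∧ D'.eval w = r}.Infinite := by
        by_contra hcon
        push_neg at hcon
        have hsub : D.reachedBy q ⊆
            ⋃ r : σ', {w : List α | D.eval w = q ∧ D'.eval w = r} := by
          intro w hw
          exact Set.mem_iUnion.2 ⟨D'.eval w, hw, rfl⟩
        exact hq ((Set.finite_iUnion
          (fun r => hcon r)).subset hsub)
      obtain ⟨r, hr⟩ := this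
      exact ⟨r, hr.nonempty, fun _ => hr⟩
    · obtain ⟨w, hw⟩ := hmin.1 q
      exact ⟨D'.eval w, ⟨w, hw, rfl⟩, fun h => absurd h hq⟩
  choose f hne hinf using key
  have hfd : ∀ q : σ, FinDiff (D.langOf q) (D'.langOf (f q)) := by
    intro q
    obtain ⟨w, hw1, hw2⟩ := hne q
    rw [← hw2, ← hw1]
    exact finDiff_langOf D D' hFD w
  have hinj : Function.Injective f := by
    intro p q hpq
    by_contra hpqne
    have hfdpq : FinDiff (D.langOf p) (D.langOf q) :=
      finDiff_trans (hfd p) (by rw [hpq]; exact finDiff_symm (hfd q))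
    by_cases hp : (D.reachedBy p).Infinite
    · by_cases hq : (D.reachedBy q).Infinite
      · have h1 := langOf_eq_of_infinite D D' hFD p (f p) (hinf p hp)
        have h2 := langOf_eq_of_infinite D D' hFD q (f q) (hinf q hq)
        rw [hpq] at h1
        exact hpqne (hmin.2 p q (h1.trans h2.symm))
      · exact hnomerge ⟨q, p, Ne.symm hpqne, Set.not_infinite.1 hq,
          finDiff_symm hfdpq⟩
    · exact hnomerge ⟨p, q, hpqne, Set.not_infinite.1 hp, hfdpq⟩
  exact Fintype.card_le_of_injective f hinj
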